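/- Let γ > 1 and let q_l, q_r ∈ ℝ⁴ be states with ρ_l, ρ_r > 0 whose Roe averages ρ̃, ũ, ṽ, H̃ satisfy H̃ − (ũ² + ṽ²)/2 > 0, and set c̃ = √((γ − 1)(H̃ − (ũ² + ṽ²)/2)). Let r̃₁ = (1, ũ − c̃, ṽ, H̃ − c̃ũ) and r̃₄ = (1, ũ + c̃, ṽ, H̃ + c̃ũ) be the acoustic right eigenvectors and l̃₁, l̃₄ the corresponding normalized left eigenvectors at the Roe state, and let Δq = q_r − q_l. Then the Rankine–Hugoniot residual 𝔯 = f(q_r) − f(q_l) − ũ·Δq satisfies 𝔯 = c̃·((l̃₄·Δq)·r̃₄ − (l̃₁·Δq)·r̃₁); that is, 𝔯/c̃ is the difference of the right-running and left-running acoustic wave components of the jump. -/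

import Mathlib

/-!
Roe's linearization: in the parameter vector `z = √ρ (1, u, v, H)` both `q` and `f(q)` are
quadratic, so the flux jump is exactly `Ã Δq`, where `Ã` is the flux Jacobian evaluated at the
Roe averages. Diagonalizing, `Ã = Σ λᵢ r̃ᵢ l̃ᵢ` with `λ₂ = λ₃ = ũ`, hence
`Ã - ũ I = c̃ (r̃₄ l̃₄ - r̃₁ l̃₁)`: subtracting `ũ Δq` removes the shear and entropy waves and
leaves the two acoustic ones with speeds `±c̃`.
-/

open Matrix

/-- Ideal-gas pressure `p(q) = (γ-1)(E - (m² + n²)/(2ρ))` in conserved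
variables `q = (ρ, m, n, E)`. -/
noncomputable def pres (γ : ℝ) (q : Fin 4 → ℝ) : ℝ :=
  (γ - 1) * (q 3 - (q 1 ^ 2 + q 2 ^ 2) / (2 * q 0))

/-- The x-direction flux of the 2D compressible Euler equations. -/
noncomputable def flux (γ : ℝ) (q : Fin 4 → ℝ) : Fin 4 → ℝ :=
  ![q 1,
    q 1 ^ 2 / q 0 + pres γ q,
    q 1 * q 2 / q 0,
    (q 3 + pres γ q) * q 1 / q 0]

/-- The Jacobian `∂f/∂q` of the Euler x-flux, written in terms of the velocity `(u, v)` and the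
total enthalpy `H` of the state. -/
noncomputable def eulerJacobian (γ u v H : ℝ) : Matrix (Fin 4) (Fin 4) ℝ :=
  !![0, 1, 0, 0;
    (γ - 1) * (u ^ 2 + v ^ 2) / 2 - u ^ 2, (3 - γ) * u, -(γ - 1) * v, γ - 1;
    -(u * v), v, u, 0;
    u * ((γ - 1) * (u ^ 2 + v ^ 2) / 2 - H), H - (γ - 1) * u ^ 2, -(γ - 1) * u * v, γ * u]

/-- Roe's property, with `sl`, `sr` any square roots of the two densities. -/
theorem flux_sub_flux_eq_eulerJacobian_mulVec (γ : ℝ) (ql qr : Fin 4 → ℝ) (sl sr : ℝ)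
    (hsl : sl ≠ 0) (hsr : sr ≠ 0) (hslr : sl + sr ≠ 0)
    (hql : ql 0 = sl ^ 2) (hqr : qr 0 = sr ^ 2) :
    flux γ qr - flux γ ql =
      eulerJacobian γ
        ((sl * (ql 1 / ql 0) + sr * (qr 1 / qr 0)) / (sl + sr))
        ((sl * (ql 2 / ql 0) + sr * (qr 2 / qr 0)) / (sl + sr))
        ((sl * ((ql 3 + pres γ ql) / ql 0) + sr * ((qr 3 + pres γ qr) / qr 0)) / (sl + sr))
        *ᵥ (qr - ql) := by
  ext i
  fin_cases i <;>
    simp [flux, pres, eulerJacobian, mulVec, dotProduct, Fin.sum_univ_four, hql, hqr] <;>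
    field_simp <;> ring

theorem eulerJacobian_sub_smul_one_eq (γ u v H c : ℝ) (hc : c ≠ 0)
    (hH : 2 * H - (u ^ 2 + v ^ 2) ≠ 0)
    (hc2 : c ^ 2 = (γ - 1) * (H - (u ^ 2 + v ^ 2) / 2)) :
    eulerJacobian γ u v H - u • 1 =
      c • (vecMulVec ![1, u + c, v, H + c * u]
          ((1 / (c * (2 * H - (u ^ 2 + v ^ 2)))) •
            ![-(H * u) + (u + c) * (u ^ 2 + v ^ 2) / 2, -((u ^ 2 + v ^ 2) / 2) + (H - c * u),
              -c * v, c]) -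
        vecMulVec ![1, u - c, v, H - c * u]
          ((1 / (c * (2 * H - (u ^ 2 + v ^ 2)))) •
            ![H * u - (u - c) * (u ^ 2 + v ^ 2) / 2, (u ^ 2 + v ^ 2) / 2 - (H + c * u),
              -c * v, c])) := by
  -- `field_simp` rewrites `2 * H` as `H * 2` and then looks for this form of `hH`
  have hH' : H * 2 - (u ^ 2 + v ^ 2) ≠ 0 := by rwa [mul_comm]
  obtain rfl : γ = 1 + 2 * c ^ 2 / (2 * H - (u ^ 2 + v ^ 2)) := by
    field_simp
    linear_combination -2 * hc2
  ext i j
  fin_cases i <;> fin_cases j <;>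
    simp [eulerJacobian, vecMulVec] <;> field_simp <;> ring

theorem stmt7 (γ : ℝ) (hγ : 1 < γ) (ql qr : Fin 4 → ℝ)
    (hρl : 0 < ql 0) (hρr : 0 < qr 0)
    (ut vt Ht ct V2 : ℝ)
    -- Roe averages: `√ρ`-weighted means of the velocities and total enthalpies
    (hut : ut = (Real.sqrt (ql 0) * (ql 1 / ql 0) + Real.sqrt (qr 0) * (qr 1 / qr 0)) /
      (Real.sqrt (ql 0) + Real.sqrt (qr 0)))
    (hvt : vt = (Real.sqrt (ql 0) * (ql 2 / ql 0) + Real.sqrt (qr 0) * (qr 2 / qr 0)) /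
      (Real.sqrt (ql 0) + Real.sqrt (qr 0)))
    (hHt : Ht = (Real.sqrt (ql 0) * ((ql 3 + pres γ ql) / ql 0) +
      Real.sqrt (qr 0) * ((qr 3 + pres γ qr) / qr 0)) /
      (Real.sqrt (ql 0) + Real.sqrt (qr 0)))
    (hpos : 0 < Ht - (ut ^ 2 + vt ^ 2) / 2)
    (hct : ct = Real.sqrt ((γ - 1) * (Ht - (ut ^ 2 + vt ^ 2) / 2)))
    (hV2 : V2 = ut ^ 2 + vt ^ 2)
    -- the acoustic right and (normalized) left eigenvectors at the Roe state
    (r1 r4 l1 l4 : Fin 4 → ℝ)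
    (hr1 : r1 = ![1, ut - ct, vt, Ht - ct * ut])
    (hr4 : r4 = ![1, ut + ct, vt, Ht + ct * ut])
    (hl1 : l1 = (1 / (ct * (2 * Ht - V2))) •
      ![Ht * ut - (ut - ct) * V2 / 2, V2 / 2 - (Ht + ct * ut), -ct * vt, ct])
    (hl4 : l4 = (1 / (ct * (2 * Ht - V2))) •
      ![-(Ht * ut) + (ut + ct) * V2 / 2, -(V2 / 2) + (Ht - ct * ut), -ct * vt, ct]) :
    flux γ qr - flux γ ql - ut • (qr - ql) =
      ct • ((l4 ⬝ᵥ (qr - ql)) • r4 - (l1 ⬝ᵥ (qr - ql)) • r1) := by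
  subst hV2 hr1 hr4 hl1 hl4
  have hsound : 0 < (γ - 1) * (Ht - (ut ^ 2 + vt ^ 2) / 2) := mul_pos (by linarith) hpos
  have hc2 : ct ^ 2 = (γ - 1) * (Ht - (ut ^ 2 + vt ^ 2) / 2) := hct ▸ Real.sq_sqrt hsound.le
  have hc : ct ≠ 0 := hct ▸ (Real.sqrt_pos.2 hsound).ne'
  have hroe := flux_sub_flux_eq_eulerJacobian_mulVec γ ql qr _ _
    (Real.sqrt_pos.2 hρl).ne' (Real.sqrt_pos.2 hρr).ne' (by positivity)
    (Real.sq_sqrt hρl.le).symm (Real.sq_sqrt hρr.le).symm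
  rw [← hut, ← hvt, ← hHt] at hroe
  calc flux γ qr - flux γ ql - ut • (qr - ql)
      = (eulerJacobian γ ut vt Ht - ut • 1) *ᵥ (qr - ql) := by
        rw [sub_mulVec, smul_mulVec, one_mulVec, hroe]
    _ = _ := by
        rw [eulerJacobian_sub_smul_one_eq γ ut vt Ht ct hc (by linarith) hc2, smul_mulVec,
          sub_mulVec, vecMulVec_mulVec, vecMulVec_mulVec, op_smul_eq_smul, op_smul_eq_smul]
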